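/- arXiv:1908.04925 — 6 statements merged into one kernel-verified Lean document; each statement's English description precedes it below -/
import Mathlib

section
/- Let G be a group such that G/Z(G) is locally finite. Then the derived subgroup G' is locally finite. -/
/-- A group is locally finite if every finitely generated subgroup is finite. -/
def LocallyFiniteGroup (G : Type*) [Group G] : Prop :=
  ∀ s : Finset G, Finite (Subgroup.closure (s : Set G))

/-- A group is locally solvable if every finitely generated subgroup is solvable. -/
def LocallySolvableGroup (G : Type*) [Group G] : Prop :=
  ∀ s : Finset G, IsSolvable (Subgroup.closure (s : Set G))

/-- A group is locally nilpotent if every finitely generated subgroup is nilpotent. -/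
def LocallyNilpotentGroup (G : Type*) [Group G] : Prop :=
  ∀ s : Finset G, Group.IsNilpotent (Subgroup.closure (s : Set G))

/-- A subgroup is subnormal if there is a finite chain of successively normal
subgroups reaching the whole group. -/
def Subgroup.IsSubnormal' {G : Type*} [Group G] (H : Subgroup G) : Prop :=
  ∃ (n : ℕ) (c : ℕ → Subgroup G), c 0 = H ∧ c n = ⊤ ∧
    ∀ i < n, c i ≤ c (i + 1) ∧ ((c i).subgroupOf (c (i + 1))).Normal

/-- A subgroup is almost subnormal (Hartley) if there is a finite chain in which
each step is either of finite index or normal. -/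
def Subgroup.IsAlmostSubnormal {G : Type*} [Group G] (H : Subgroup G) : Prop :=
  ∃ (n : ℕ) (c : ℕ → Subgroup G), c 0 = H ∧ c n = ⊤ ∧
    ∀ i < n, c i ≤ c (i + 1) ∧
      (((c i).subgroupOf (c (i + 1))).Normal ∨ (c i).relIndex (c (i + 1)) ≠ 0)
/-!
Every element of `G'` is a product of finitely many commutators, so a finite subset of `G'` lies in
`H'` for some finitely generated subgroup `H`. The image of `H` in `G/Z(G)` is finite, and the
kernel `H ∩ Z(G)` of `H → G/Z(G)` is central in `H`, so `Z(H)` has finite index in `H`. By Schur's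
theorem `H'` is then finite: a commutator `⁅a, b⁆` only depends on the cosets of `a` and `b` modulo
the centre, so `H` has finitely many commutators.
-/

section

open Subgroup
open scoped commutatorElement

variable {G : Type*} [Group G]

theorem commutatorElement_mul_center {a b z w : G} (hz : z ∈ center G) (hw : w ∈ center G) :
    ⁅a * z, b * w⁆ = ⁅a, b⁆ := by
  have hzb : ⁅z, b * w⁆ = 1 :=
    commutatorElement_eq_one_iff_mul_comm.mpr (mem_center_iff.mp hz _).symm
  have haw : ⁅a, w⁆ = 1 := commutatorElement_eq_one_iff_mul_comm.mpr (mem_center_iff.mp hw a)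
  rw [commutatorElement_mul_left_eq_conj_mul, hzb, commutatorElement_mul_right_eq_mul_conj, haw]
  group

theorem finite_commutatorSet_of_finite_quotient_center [Finite (G ⧸ center G)] :
    Finite (commutatorSet G) := by
  refine Set.Finite.to_subtype <| (Set.finite_range fun p : (G ⧸ center G) × (G ⧸ center G) =>
    ⁅p.1.out, p.2.out⁆).subset ?_
  rintro _ ⟨a, b, rfl⟩
  obtain ⟨z, hz⟩ := QuotientGroup.mk_out_eq_mul (center G) a
  obtain ⟨w, hw⟩ := QuotientGroup.mk_out_eq_mul (center G) b
  exact ⟨(a, b), by simp only [hz, hw, commutatorElement_mul_center z.2 w.2]⟩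

theorem finite_commutator_of_finiteIndex_center [(center G).FiniteIndex] :
    Finite (commutator G) :=
  have := finite_commutatorSet_of_finite_quotient_center (G := G)
  inferInstance

theorem finiteIndex_center_of_finite_map_quotient_center {H : Subgroup G}
    (hH : Finite (H.map (QuotientGroup.mk' (center G)))) : (center H).FiniteIndex := by
  let φ := (QuotientGroup.mk' (center G)).comp H.subtype
  have : Finite φ.range := by rwa [MonoidHom.range_comp, range_subtype]
  refine finiteIndex_of_le (H := φ.ker) fun x hx => mem_center_iff.mpr fun y => ?_
  have hx : (x : G) ∈ center G := by simpa [φ] using hx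
  exact Subtype.ext (mem_center_iff.mp hx y)

theorem finite_commutator_of_finite_map_quotient_center {H : Subgroup G}
    (hH : Finite (H.map (QuotientGroup.mk' (center G)))) : Finite (⁅H, H⁆ : Subgroup G) := by
  have := finiteIndex_center_of_finite_map_quotient_center hH
  have := finite_commutator_of_finiteIndex_center (G := H)
  rw [← H.range_subtype, MonoidHom.range_eq_map, ← map_commutator, ← commutator_def]
  exact Finite.Set.finite_image _ _

theorem commutator_closure_mono {S T : Set G} (h : S ⊆ T) :
    ⁅closure S, closure S⁆ ≤ ⁅closure T, closure T⁆ :=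
  commutator_mono (closure_mono h) (closure_mono h)

theorem exists_finset_mem_commutator_closure {x : G} (hx : x ∈ commutator G) :
    ∃ T : Finset G, x ∈ ⁅closure (T : Set G), closure (T : Set G)⁆ := by
  classical
  rw [commutator_eq_closure] at hx
  induction hx using closure_induction with
  | mem _ hx =>
    obtain ⟨a, b, rfl⟩ := hx
    exact ⟨{a, b}, commutator_mem_commutator (subset_closure (by simp)) (subset_closure (by simp))⟩
  | one => exact ⟨∅, one_mem _⟩
  | mul x y _ _ hx hy =>
    obtain ⟨T, hT⟩ := hx
    obtain ⟨U, hU⟩ := hy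
    refine ⟨T ∪ U, mul_mem ?_ ?_⟩
    · exact commutator_closure_mono (by simp) hT
    · exact commutator_closure_mono (by simp) hU
  | inv x _ hx =>
    obtain ⟨T, hT⟩ := hx
    exact ⟨T, inv_mem hT⟩

theorem locallyFiniteGroup_of_forall_finset_subset_finite {K : Subgroup G}
    (h : ∀ s : Finset G, (s : Set G) ⊆ K → ∃ L : Subgroup G, Finite L ∧ (s : Set G) ⊆ L) :
    LocallyFiniteGroup K := by
  classical
  intro s
  obtain ⟨L, hL, hsL⟩ := h (s.image K.subtype) <| by
    rw [Finset.coe_image, Set.image_subset_iff]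
    exact fun x _ => x.2
  have hle : closure (s : Set K) ≤ L.comap K.subtype :=
    closure_le _ |>.mpr fun x hx => hsL (Finset.mem_coe.mpr (Finset.mem_image_of_mem _ hx))
  exact Finite.of_injective (fun x : closure (s : Set K) => (⟨x, hle x.2⟩ : L))
    fun x y hxy => Subtype.ext <| Subtype.ext <| Subtype.mk.inj hxy

end

theorem stmt0 (G : Type*) [Group G]
    (h : LocallyFiniteGroup (G ⧸ Subgroup.center G)) :
    LocallyFiniteGroup (commutator G) := by
  classical
  refine locallyFiniteGroup_of_forall_finset_subset_finite fun s hs => ?_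
  choose T hT using fun x : s => exists_finset_mem_commutator_closure (hs x.2)
  let U := s.attach.biUnion T
  have hU :
      Finite ((Subgroup.closure (U : Set G)).map (QuotientGroup.mk' (Subgroup.center G))) := by
    rw [MonoidHom.map_closure, ← Finset.coe_image]
    exact h _
  refine ⟨_, finite_commutator_of_finite_map_quotient_center hU, fun x hx => ?_⟩
  have hTU : (T ⟨x, hx⟩ : Set G) ⊆ U := by
    simpa using Finset.subset_biUnion_of_mem T (s.mem_attach ⟨x, hx⟩)
  exact commutator_closure_mono hTU (hT ⟨x, hx⟩)
end

section
/- Every locally solvable periodic group is locally finite. -/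
/-! A finitely generated periodic abelian group is finite. Applied to the abelianization, this
shows that in a finitely generated periodic group the commutator subgroup has finite index, hence
is again finitely generated (Schreier) and periodic. Iterating down the derived series, every term
has finite index; for a solvable group some term is trivial, so the group is finite. -/

open Subgroup

instance Subgroup.finiteIndex_map_subtype {G : Type*} [Group G] {H : Subgroup G} [H.FiniteIndex]
    (K : Subgroup H) [K.FiniteIndex] : (K.map H.subtype).FiniteIndex :=
  ⟨by
    rw [index_map_subtype]
    exact mul_ne_zero FiniteIndex.index_ne_zero FiniteIndex.index_ne_zero⟩

namespace IsMulTorsion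

variable {G : Type*} [Group G] [Group.FG G]

theorem finiteIndex_commutator (hG : IsMulTorsion G) : (commutator G).FiniteIndex := by
  have : Group.FG (Abelianization G) := QuotientGroup.fg (commutator G)
  have : Finite (Abelianization G) := CommGroup.finite_of_fg_isMulTorsion _ <|
    hG.of_surjective (QuotientGroup.mk'_surjective (commutator G))
  exact @finiteIndex_of_finite_quotient _ _ _ this

theorem finiteIndex_derivedSeries (hG : IsMulTorsion G) (n : ℕ) :
    (derivedSeries G n).FiniteIndex := by
  induction n with
  | zero => rw [derivedSeries_zero]; infer_instance
  | succ n ih =>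
    have := (hG.subgroup (derivedSeries G n)).finiteIndex_commutator
    rw [derivedSeries_succ, ← map_subtype_commutator]
    infer_instance

end IsMulTorsion

theorem Group.IsSolvable.finite_of_fg_isMulTorsion {G : Type*} [Group G] [Group.FG G]
    [Group.IsSolvable G] (hG : IsMulTorsion G) : Finite G := by
  obtain ⟨n, hn⟩ := Group.IsSolvable.solvable (G := G)
  have := hG.finiteIndex_derivedSeries n
  rw [hn] at this
  exact (finite_iff_finite_and_finiteIndex ⊥).mpr ⟨inferInstance, this⟩

theorem stmt1 (G : Type*) [Group G] (hsol : LocallySolvableGroup G)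
    (hper : ∀ g : G, IsOfFinOrder g) :
    LocallyFiniteGroup G := fun s =>
  haveI : Group.IsSolvable _ := hsol s
  Group.IsSolvable.finite_of_fg_isMulTorsion (IsMulTorsion.subgroup hper _)
end

section
/- Let D be a division ring with center F, and let G be a locally finite subgroup of the multiplicative group D*. Then the subring F[G] of D generated by F and G equals the division subring F(G) generated by F and G; that is, F[G] is a division ring. -/
theorem IsIntegral.of_mem_span_submonoid {R A : Type*} [CommRing R] [Ring A] [Algebra R A]
    (M : Submonoid A) (hM : (M : Set A).Finite) {x : A} (hx : x ∈ Submodule.span R (M : Set A)) :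
    IsIntegral R x := by
  have hspan : Subalgebra.toSubmodule (Algebra.adjoin R (M : Set A)) = Submodule.span R M := by
    rw [Algebra.adjoin_eq_span, Submonoid.closure_eq]
  exact .of_mem_of_fg _ (hspan ▸ Submodule.fg_span hM) x
    (by rwa [← Subalgebra.mem_toSubmodule, hspan])

theorem LocallyFiniteGroup.isIntegral_of_mem_adjoin {F D : Type*} [CommRing F] [Ring D]
    [Algebra F D] {G : Subgroup Dˣ} (hG : LocallyFiniteGroup G) {x : D}
    (hx : x ∈ Algebra.adjoin F (Units.val '' (G : Set Dˣ))) : IsIntegral F x := by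
  classical
  let φ : G →* D := (Units.coeHom D).comp G.subtype
  have hrange : Units.val '' (G : Set Dˣ) = MonoidHom.mrange φ := by
    ext; simp [φ]
  rw [← Subalgebra.mem_toSubmodule, Algebra.adjoin_eq_span, hrange, Submonoid.closure_eq] at hx
  obtain ⟨T, hT, hxT⟩ := Submodule.mem_span_finite_of_mem_span hx
  rw [MonoidHom.coe_mrange, ← Set.image_univ, Finset.subset_set_image_iff] at hT
  obtain ⟨s, -, rfl⟩ := hT
  have : Finite (Subgroup.closure (s : Set G)) := hG s
  refine .of_mem_span_submonoid ((Subgroup.closure (s : Set G)).toSubmonoid.map φ)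
    ((Set.toFinite _).image φ) (Submodule.span_mono ?_ hxT)
  rw [Finset.coe_image]
  exact Set.image_mono Subgroup.subset_closure

theorem Subring.closure_eq_subfield_closure {D : Type*} [DivisionRing D] {s : Set D}
    (hinv : ∀ x ∈ Subring.closure s, x⁻¹ ∈ Subring.closure s) :
    Subring.closure s = (Subfield.closure s).toSubring :=
  le_antisymm (Subring.closure_le.2 Subfield.subset_closure)
    (Subfield.closure_le (t := { Subring.closure s with inv_mem' := hinv }).2
      Subring.subset_closure)

theorem stmt3 (D : Type*) [DivisionRing D] (G : Subgroup Dˣ)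
    (hG : LocallyFiniteGroup G) :
    Subring.closure ((Subring.center D : Set D) ∪ Units.val '' (G : Set Dˣ)) =
      (Subfield.closure ((Subring.center D : Set D) ∪ Units.val '' (G : Set Dˣ))).toSubring := by
  have hadjoin : Subring.closure ((Subring.center D : Set D) ∪ Units.val '' (G : Set Dˣ)) =
      (Algebra.adjoin (Subring.center D) (Units.val '' (G : Set Dˣ))).toSubring := by
    rw [Algebra.adjoin_eq_ring_closure,
      show Set.range (algebraMap (Subring.center D) D) = Subring.center D from Subtype.range_val]
  refine Subring.closure_eq_subfield_closure fun x hx => ?_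
  rw [hadjoin] at hx ⊢
  exact (hG.isIntegral_of_mem_adjoin hx).inv_mem hx
end

section
/- Let D be a division ring with center F, and let G be a locally finite subgroup of D* with F(G) = D. Then D is locally finite over F, i.e., every finitely generated division subring of D containing F is finite-dimensional over F. -/
/-!
For a finite subgroup `H` of `Dˣ`, the `F`-algebra generated by `H` is the `F`-span of `H`,
hence finite-dimensional; its elements are then integral over `F`, so it is closed under
inverses and is a subfield. As `G` is locally finite, these subfields, indexed by the finite
subsets of `G`, form a directed family whose union contains `F` and `G`, hence is all of `D`.
A finite subset of `D` therefore lies in one of them, which is finite-dimensional over `F`.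
-/

theorem MonoidHom.finite_mclosure_image {M N : Type*} [Group M] [Monoid N] (φ : M →* N)
    {s : Set M} (hs : (Subgroup.closure s : Set M).Finite) :
    (Submonoid.closure (φ '' s) : Set N).Finite := by
  rw [← MonoidHom.map_mclosure, Submonoid.coe_map]
  exact (hs.subset (Submonoid.closure_le.mpr Subgroup.subset_closure)).image φ

theorem Algebra.fg_adjoin_of_finite_mclosure {R A : Type*} [CommSemiring R] [Semiring A]
    [Algebra R A] {S : Set A} (hS : (Submonoid.closure S : Set A).Finite) :
    (Subalgebra.toSubmodule (Algebra.adjoin R S)).FG :=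
  Algebra.adjoin_eq_span R S ▸ Submodule.fg_span hS

section

variable {F D : Type*} [Field F] [DivisionRing D] [Algebra F D]

def Subalgebra.toSubfieldOfIsIntegral (A : Subalgebra F D) (hA : ∀ x ∈ A, IsIntegral F x) :
    Subfield D :=
  { A.toSubring with inv_mem' := fun x hx => (hA x hx).inv_mem hx }

theorem exists_finset_subfieldClosure_subset_span {G : Subgroup Dˣ} (hG : LocallyFiniteGroup G)
    (hgen : Subfield.closure (Set.range (algebraMap F D) ∪ Units.val '' (G : Set Dˣ)) = ⊤)
    (s : Finset D) : ∃ t : Finset D,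
      (Subfield.closure (Set.range (algebraMap F D) ∪ s) : Set D) ⊆
        Submodule.span F (t : Set D) := by
  let φ : G →* D := (Units.coeHom D).comp G.subtype
  have hfg (u : Finset G) : (Subalgebra.toSubmodule (Algebra.adjoin F (φ '' u))).FG :=
    have := hG u
    Algebra.fg_adjoin_of_finite_mclosure (φ.finite_mclosure_image (Set.toFinite _))
  let K (u : Finset G) : Subfield D :=
    (Algebra.adjoin F (φ '' u)).toSubfieldOfIsIntegral (IsIntegral.of_mem_of_fg _ (hfg u))
  have hK : Directed (· ≤ ·) K :=
    Monotone.directed_le fun u v huv => Algebra.adjoin_mono (Set.image_mono huv)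
  have hK_top : ⊤ ≤ ⨆ u, K u := by
    rw [← hgen, Subfield.closure_le]
    refine Set.union_subset ?_ ?_
    · rintro _ ⟨c, rfl⟩
      exact le_iSup K ∅ (Subalgebra.algebraMap_mem _ c)
    · rintro _ ⟨g, hg, rfl⟩
      exact le_iSup K {⟨g, hg⟩} <|
        Algebra.subset_adjoin ⟨⟨g, hg⟩, Finset.mem_singleton_self _, rfl⟩
  have hs : (s : Set D) ⊆ ⋃ u, (K u : Set D) := by
    rw [← Subfield.coe_iSup_of_directed hK]
    exact fun x _ => hK_top (Subfield.mem_top x)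
  obtain ⟨u, hu⟩ :=
    (hK.mono_comp _ fun _ _ h => h).exists_mem_subset_of_finset_subset_biUnion hs
  obtain ⟨t, ht⟩ := hfg u
  refine ⟨t, ht ▸ Subfield.closure_le.mpr (Set.union_subset ?_ hu)⟩
  rintro _ ⟨c, rfl⟩
  exact Subalgebra.algebraMap_mem _ c

end

theorem stmt4 (D : Type*) [DivisionRing D] (G : Subgroup Dˣ)
    (hG : LocallyFiniteGroup G)
    (hgen : Subfield.closure ((Subring.center D : Set D) ∪ Units.val '' (G : Set Dˣ)) = ⊤) :
    ∀ s : Finset D, ∃ t : Finset D,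
      ∀ x ∈ Subfield.closure ((Subring.center D : Set D) ∪ (s : Set D)),
        x ∈ Submodule.span (Subring.center D) (t : Set D) := by
  have hcenter : Set.range (algebraMap (Subring.center D) D) = Subring.center D :=
    Subtype.range_coe
  rw [← hcenter] at hgen ⊢
  exact exists_finset_subfieldClosure_subset_span hG hgen
end

section
/- Let D be a division ring with center F and suppose F is finite. If G is a finite subgroup of D*, then G is contained in F (equivalently, G is cyclic and central). In particular, every finite subnormal subgroup of D* is central. -/
/-!
A finite center forces positive characteristic `p`. There a finite multiplicative monoid spans a
finite `𝔽_p`-subalgebra, which is a field by Wedderburn's little theorem; so finite subgroups of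
`Dˣ`, and more generally finite submonoids, are abelian.

Along the subnormal series `G = c₀ ⊴ c₁ ⊴ ⋯ ⊴ cₙ = Dˣ` we carry an abelian torsion subgroup
`N ⊴ cᵢ` containing `G`, and replace it by the subgroup generated by its `cᵢ₊₁`-conjugates. Any two
of these conjugates `A, B` are normal in `cᵢ`, so for `s ∈ A`, `t ∈ B` the commutator `⁅s, t⁆` lies
in `A ⊓ B` and commutes with `s` and `t`; then `⟨s, t⟩` is finite, hence abelian. At the top we
get an abelian normal subgroup of `Dˣ` containing `G`, and such a subgroup is central by Hua's
argument.
-/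

open scoped commutatorElement Pointwise

section Group

variable {G : Type*} [Group G]

theorem pow_mul_pow_eq_of_mul_eq_mul_mul {s t d : G} (hst : s * t = d * t * s)
    (hsd : Commute s d) (htd : Commute t d) (i j : ℕ) :
    s ^ i * t ^ j = d ^ (i * j) * t ^ j * s ^ i := by
  have hconj (i : ℕ) : s ^ i * t * (s ^ i)⁻¹ = d ^ i * t := by
    induction i with
    | zero => simp
    | succ i ih =>
      calc s ^ (i + 1) * t * (s ^ (i + 1))⁻¹ = s * (s ^ i * t * (s ^ i)⁻¹) * s⁻¹ := by group
        _ = s * d ^ i * t * s⁻¹ := by rw [ih]; group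
        _ = d ^ i * (s * t) * s⁻¹ := by rw [(hsd.pow_right i).eq]; group
        _ = d ^ (i + 1) * t := by rw [hst]; group
  calc s ^ i * t ^ j = (s ^ i * t * (s ^ i)⁻¹) ^ j * s ^ i := by rw [conj_pow]; group
    _ = d ^ (i * j) * t ^ j * s ^ i := by
      rw [hconj, ((htd.pow_right i).symm).mul_pow, pow_mul]

/-- Every element of the monoid generated by `s` and `t` has the normal form
`t ^ j * s ^ i * d ^ k`. -/
theorem finite_closure_pair_of_mul_eq_mul_mul {s t d : G} (hs : IsOfFinOrder s)
    (ht : IsOfFinOrder t) (hd : IsOfFinOrder d) (hst : s * t = d * t * s)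
    (hsd : Commute s d) (htd : Commute t d) :
    (Submonoid.closure {s, t} : Set G).Finite := by
  have hcomm (k j i : ℕ) : Commute (d ^ k) (t ^ j * s ^ i) :=
    (htd.symm.pow_pow k j).mul_right (hsd.symm.pow_pow k i)
  let M : Submonoid G :=
    { carrier := {x | ∃ i j k : ℕ, t ^ j * s ^ i * d ^ k = x}
      one_mem' := ⟨0, 0, 0, by simp⟩
      mul_mem' := by
        rintro _ _ ⟨i, j, k, rfl⟩ ⟨i', j', k', rfl⟩
        refine ⟨i + i', j + j', i * j' + k + k', ?_⟩
        calc t ^ (j + j') * s ^ (i + i') * d ^ (i * j' + k + k')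
            = t ^ j * (d ^ (i * j') * (t ^ j' * s ^ (i + i'))) * d ^ (k + k') := by
              rw [(hcomm (i * j') j' (i + i')).eq]; simp only [pow_add]; group
          _ = t ^ j * (s ^ i * t ^ j') * s ^ i' * d ^ (k + k') := by
              rw [pow_mul_pow_eq_of_mul_eq_mul_mul hst hsd htd]; simp only [pow_add]; group
          _ = t ^ j * s ^ i * (d ^ k * (t ^ j' * s ^ i')) * d ^ k' := by
              rw [(hcomm k j' i').eq]; simp only [pow_add]; group
          _ = t ^ j * s ^ i * d ^ k * (t ^ j' * s ^ i' * d ^ k') := by group }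
  have hM : (M : Set G) ⊆
      (Submonoid.powers t : Set G) * Submonoid.powers s * Submonoid.powers d := by
    rintro _ ⟨i, j, k, rfl⟩
    exact Set.mul_mem_mul (Set.mul_mem_mul ⟨j, rfl⟩ ⟨i, rfl⟩) ⟨k, rfl⟩
  refine (((ht.finite_powers.mul hs.finite_powers).mul hd.finite_powers).subset hM).subset ?_
  rw [SetLike.coe_subset_coe, Submonoid.closure_le, Set.insert_subset_iff,
    Set.singleton_subset_iff]
  exact ⟨⟨1, 0, 0, by simp⟩, ⟨0, 1, 0, by simp⟩⟩

namespace Subgroup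

theorem isOfFinOrder_of_mem_closure {S : Set G} (hcomm : ∀ x ∈ S, ∀ y ∈ S, x * y = y * x)
    (hS : ∀ x ∈ S, IsOfFinOrder x) {x : G} (hx : x ∈ closure S) : IsOfFinOrder x := by
  have := isMulCommutative_closure hcomm
  induction hx using closure_induction with
  | mem x hx => exact hS x hx
  | one => exact .one
  | mul x y hx hy ihx ihy =>
    exact Commute.isOfFinOrder_mul (setLike_mul_comm hx hy) ihx ihy
  | inv x _ ih => exact isOfFinOrder_inv_iff.mpr ih

theorem commutatorElement_mem_inf {A B : Subgroup G} {s t : G} (hs : s ∈ A) (ht : t ∈ B)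
    (hsB : s ∈ normalizer B) (htA : t ∈ normalizer A) : ⁅s, t⁆ ∈ A ⊓ B := by
  constructor
  · rw [show ⁅s, t⁆ = s * (t * s⁻¹ * t⁻¹) by group]
    exact A.mul_mem hs ((htA _).mp (A.inv_mem hs))
  · exact B.mul_mem ((hsB t).mp ht) (B.inv_mem ht)

structure IsAbelianTorsionNormalIn (N K : Subgroup G) : Prop where
  le : N ≤ K
  le_normalizer : K ≤ normalizer N
  isMulCommutative : IsMulCommutative N
  isOfFinOrder : ∀ g ∈ N, IsOfFinOrder g

namespace IsAbelianTorsionNormalIn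

variable {N K : Subgroup G}

theorem map_conj (hN : N.IsAbelianTorsionNormalIn K) {y : G} (hy : y ∈ normalizer K) :
    (N.map (MulAut.conj y)).IsAbelianTorsionNormalIn K := by
  have hK : K.map (MulAut.conj y) = K := mem_normalizer_iff_map_conj_eq.mp hy
  have := hN.isMulCommutative
  refine ⟨(map_mono hN.le).trans hK.le, ?_, inferInstance, ?_⟩
  · exact hK.symm.le.trans ((map_mono hN.le_normalizer).trans (le_normalizer_map _))
  · rintro _ ⟨g, hg, rfl⟩
    exact MonoidHom.isOfFinOrder _ (hN.isOfFinOrder g hg)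

end IsAbelianTorsionNormalIn

end Subgroup

end Group

section DivisionRing

variable {D : Type*} [DivisionRing D]

theorem ringChar_ne_zero_of_finite_center [Finite (Subring.center D)] : ringChar D ≠ 0 := by
  intro h
  have : CharZero D := CharP.charP_zero_iff_charZero D |>.mp (h ▸ ringChar.charP D)
  exact not_finite (Subring.center D)

theorem mem_center_of_forall_commute_conj {a : D} (h : ∀ x : D, Commute a (x * a * x⁻¹)) :
    a ∈ Subring.center D := by
  rw [Subring.mem_center_iff]
  intro x
  by_cases hx : x = 0
  · simp [hx]
  by_cases hx1 : 1 + x = 0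
  · rw [eq_neg_of_add_eq_zero_right hx1]
    simp
  set y := x * a * x⁻¹
  set z := (1 + x) * a * (1 + x)⁻¹
  have hy : x * a = y * x := by simp [y, hx]
  have hz : (1 + x) * a = z * (1 + x) := by simp [z, hx1]
  -- Hua: `x` is recovered from `a` and two of its conjugates, unless `z = y`.
  have key : (z - y) * x = a - z :=
    calc (z - y) * x = z * (1 + x) - z - y * x := by noncomm_ring
      _ = (1 + x) * a - z - x * a := by rw [hz, hy]
      _ = a - z := by noncomm_ring
  rcases eq_or_ne z y with hzy | hzy
  · rw [hzy, sub_self, zero_mul, eq_comm, sub_eq_zero] at key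
    rw [hzy, ← key] at hz
    simpa [add_mul, mul_add] using hz
  · have hx' : x = (z - y)⁻¹ * (a - z) := by
      rw [← key, inv_mul_cancel_left₀ (sub_ne_zero.mpr hzy)]
    rw [hx']
    exact (((h (1 + x)).sub_right (h x)).inv_right₀.mul_right
      ((Commute.refl a).sub_right (h (1 + x)))).eq.symm

theorem Subgroup.val_mem_center_of_isMulCommutative (N : Subgroup Dˣ) [N.Normal]
    [IsMulCommutative N] {a : Dˣ} (ha : a ∈ N) : (a : D) ∈ Subring.center D := by
  refine mem_center_of_forall_commute_conj fun x ↦ ?_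
  rcases eq_or_ne x 0 with rfl | hx
  · simp
  have := setLike_mul_comm ha (‹N.Normal›.conj_mem a ha (Units.mk0 x hx))
  simpa using Commute.units_val this

theorem Submonoid.commute_of_finite (hD : ringChar D ≠ 0) (M : Submonoid D) [Finite M]
    {a b : D} (ha : a ∈ M) (hb : b ∈ M) : Commute a b := by
  have : Fact (ringChar D).Prime := ⟨(CharP.char_is_prime_or_zero D _).resolve_right hD⟩
  let := ZMod.algebra D (ringChar D)
  let A := Algebra.adjoin (ZMod (ringChar D)) (M : Set D)
  have hspan : Subalgebra.toSubmodule A = Submodule.span _ M := by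
    rw [Algebra.adjoin_eq_span, Submonoid.closure_eq]
  have : Module.Finite (ZMod (ringChar D)) (Subalgebra.toSubmodule A) := by
    rw [hspan]
    exact Module.Finite.span_of_finite _ (Set.toFinite _)
  have : Finite A := Module.finite_of_finite (ZMod (ringChar D)) (M := Subalgebra.toSubmodule A)
  exact congrArg Subtype.val ((Finite.isDomain_to_isField A).mul_comm
    ⟨a, Algebra.subset_adjoin ha⟩ ⟨b, Algebra.subset_adjoin hb⟩)

theorem Units.commute_of_finite_submonoid (hD : ringChar D ≠ 0) (M : Submonoid Dˣ) [Finite M]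
    {a b : Dˣ} (ha : a ∈ M) (hb : b ∈ M) : Commute a b :=
  have : Finite (M.map (Units.coeHom D)) := ((M : Set Dˣ).toFinite.image _).to_subtype
  Commute.units_of_val <| Submonoid.commute_of_finite hD (M.map (Units.coeHom D))
    (Submonoid.mem_map_of_mem _ ha) (Submonoid.mem_map_of_mem _ hb)

theorem Units.commute_of_commute_commutatorElement (hD : ringChar D ≠ 0) {s t : Dˣ}
    (hs : IsOfFinOrder s) (ht : IsOfFinOrder t) (hd : IsOfFinOrder ⁅s, t⁆) (hsd : Commute s ⁅s, t⁆)
    (htd : Commute t ⁅s, t⁆) : Commute s t :=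
  have := (finite_closure_pair_of_mul_eq_mul_mul hs ht hd
    (by rw [commutatorElement_def]; group) hsd htd).to_subtype
  Units.commute_of_finite_submonoid hD _ (Submonoid.subset_closure (Set.mem_insert s {t}))
    (Submonoid.subset_closure (Set.mem_insert_of_mem s rfl))

namespace Subgroup.IsAbelianTorsionNormalIn

variable {N K L : Subgroup Dˣ}

theorem commute (hD : ringChar D ≠ 0) {A B : Subgroup Dˣ} (hA : A.IsAbelianTorsionNormalIn K)
    (hB : B.IsAbelianTorsionNormalIn K) {s t : Dˣ} (hs : s ∈ A) (ht : t ∈ B) : Commute s t :=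
  have := hA.isMulCommutative
  have := hB.isMulCommutative
  have hd := Subgroup.commutatorElement_mem_inf hs ht (hB.le_normalizer (hA.le hs))
    (hA.le_normalizer (hB.le ht))
  Units.commute_of_commute_commutatorElement hD (hA.isOfFinOrder s hs) (hB.isOfFinOrder t ht)
    (hA.isOfFinOrder _ hd.1) (setLike_mul_comm hs hd.1) (setLike_mul_comm ht hd.2)

/-- The witness is the subgroup generated by the `L`-conjugates of `N`; these conjugates are
again abelian torsion normal subgroups of `K`, so they commute with each other. -/
theorem exists_le_of_le_normalizer (hD : ringChar D ≠ 0) (hN : N.IsAbelianTorsionNormalIn K)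
    (hKL : K ≤ L) (hLK : L ≤ Subgroup.normalizer K) :
    ∃ N', N ≤ N' ∧ N'.IsAbelianTorsionNormalIn L := by
  let S : Set Dˣ := {x | ∃ y ∈ L, x ∈ N.map (MulAut.conj y)}
  have hcomm : ∀ x ∈ S, ∀ x' ∈ S, x * x' = x' * x := by
    rintro x ⟨y, hy, hx⟩ x' ⟨y', hy', hx'⟩
    exact (commute hD (hN.map_conj (hLK hy)) (hN.map_conj (hLK hy')) hx hx').eq
  refine ⟨closure S, fun g hg ↦ subset_closure ⟨1, L.one_mem, g, hg, by simp⟩, ?_, ?_,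
    isMulCommutative_closure hcomm, fun g hg ↦ isOfFinOrder_of_mem_closure hcomm ?_ hg⟩
  · rw [closure_le]
    rintro x ⟨y, hy, hx⟩
    exact hKL ((hN.map_conj (hLK hy)).le hx)
  · refine le_normalizer_closure_iff.mpr ?_
    rintro h hh _ ⟨y, hy, g, hg, rfl⟩
    exact subset_closure ⟨h * y, L.mul_mem hh hy, g, hg, by simp [mul_assoc]⟩
  · rintro x ⟨y, hy, hx⟩
    exact (hN.map_conj (hLK hy)).isOfFinOrder x hx

theorem exists_le_top_of_isSubnormal' (hD : ringChar D ≠ 0) {H : Subgroup Dˣ}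
    (hN : N.IsAbelianTorsionNormalIn H) (hH : H.IsSubnormal') :
    ∃ N', N ≤ N' ∧ N'.IsAbelianTorsionNormalIn ⊤ := by
  obtain ⟨n, c, rfl, hcn, hc⟩ := hH
  suffices ∀ i ≤ n, ∃ N', N ≤ N' ∧ N'.IsAbelianTorsionNormalIn (c i) from hcn ▸ this n le_rfl
  intro i
  induction i with
  | zero => exact fun _ ↦ ⟨N, le_rfl, hN⟩
  | succ i ih =>
    intro hi
    obtain ⟨N', hNN', hN'⟩ := ih (by omega)
    obtain ⟨hle, hnormal⟩ := hc i hi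
    obtain ⟨N'', hN'N'', hN''⟩ := exists_le_of_le_normalizer hD hN' hle
      (le_normalizer_of_normal_subgroupOf (hK := hnormal) hle)
    exact ⟨N'', hNN'.trans hN'N'', hN''⟩

end Subgroup.IsAbelianTorsionNormalIn

theorem Subgroup.isAbelianTorsionNormalIn_self_of_finite (hD : ringChar D ≠ 0) (G : Subgroup Dˣ)
    [Finite G] : G.IsAbelianTorsionNormalIn G where
  le := le_rfl
  le_normalizer := le_normalizer
  isMulCommutative := .of_setLike_mul_comm fun _ ha _ hb ↦
    (Units.commute_of_finite_submonoid hD G.toSubmonoid ha hb).eq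
  isOfFinOrder g hg := Submonoid.isOfFinOrder_coe.mpr (isOfFinOrder_of_finite (⟨g, hg⟩ : G))

end DivisionRing

theorem stmt8 (D : Type*) [DivisionRing D] (hF : Finite (Subring.center D))
    (G : Subgroup Dˣ) (hfin : Finite G) (hsub : G.IsSubnormal') :
    ∀ g ∈ G, (g : D) ∈ Subring.center D := by
  have hD : ringChar D ≠ 0 := ringChar_ne_zero_of_finite_center
  obtain ⟨N, hGN, hN⟩ := Subgroup.IsAbelianTorsionNormalIn.exists_le_top_of_isSubnormal' hD
    (Subgroup.isAbelianTorsionNormalIn_self_of_finite hD G) hsub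
  have : N.Normal := Subgroup.normalizer_eq_top_iff.mp (top_le_iff.mp hN.le_normalizer)
  have := hN.isMulCommutative
  exact fun g hg ↦ N.val_mem_center_of_isMulCommutative (hGN hg)
end

section
/- Let G be a group, τ(G) its unique maximal periodic normal subgroup, and B(G) the subgroup with B(G)/τ(G) the Hirsch–Plotkin radical of G/τ(G). If τ(G) is contained in the center of G (more generally, if every finitely generated subgroup H of B(G) satisfies [[H,H],...,H] ⊆ τ(G) ⊆ Z(G)), then B(G) is locally nilpotent. -/
/-!
A central extension of a nilpotent group is nilpotent (of class at most one more). If `f`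
has central kernel, then so does its restriction to any subgroup `H`, so `H` is nilpotent as
soon as `f '' H` is. Applied to the finitely generated subgroups of `B` and the quotient map
`B → B T / T`, whose kernel `T` is central, this shows that `B` is locally nilpotent.
-/

section CentralKernel

variable {G K : Type*} [Group G] [Group K] (f : G →* K)

theorem MonoidHom.ker_subgroupMap_le_center (hf : f.ker ≤ Subgroup.center G)
    (H : Subgroup G) : (f.subgroupMap H).ker ≤ Subgroup.center H := fun _ hx =>
  Subgroup.mem_center_iff.mpr fun y => Subtype.ext <|
    Subgroup.mem_center_iff.mp (hf (congrArg Subtype.val (MonoidHom.mem_ker.mp hx))) y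

theorem Subgroup.isNilpotent_of_isNilpotent_map (hf : f.ker ≤ Subgroup.center G)
    (H : Subgroup G) [Group.IsNilpotent (H.map f)] : Group.IsNilpotent H :=
  isNilpotent_of_ker_le_center (f.subgroupMap H) (f.ker_subgroupMap_le_center hf H)

theorem LocallyNilpotentGroup.of_ker_le_center (hf : f.ker ≤ Subgroup.center G)
    (hK : LocallyNilpotentGroup K) : LocallyNilpotentGroup G := by
  classical
  intro s
  have : Group.IsNilpotent ((Subgroup.closure (s : Set G)).map f) := by
    rw [MonoidHom.map_closure, ← Finset.coe_image]
    exact hK (s.image f)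
  exact Subgroup.isNilpotent_of_isNilpotent_map f hf _

end CentralKernel

theorem stmt15_general (G : Type*) [Group G] (T B : Subgroup G) [hTn : T.Normal]
    (hTZ : T ≤ Subgroup.center G)
    (hBnil : LocallyNilpotentGroup (B.map (QuotientGroup.mk' T))) :
    LocallyNilpotentGroup B := by
  have hker : (QuotientGroup.mk' T).ker ≤ Subgroup.center G := by
    rwa [QuotientGroup.ker_mk']
  exact LocallyNilpotentGroup.of_ker_le_center _
    ((QuotientGroup.mk' T).ker_subgroupMap_le_center hker B) hBnil

theorem stmt15 (G : Type*) [Group G] (T B : Subgroup G) [hTn : T.Normal]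
    (hTZ : T ≤ Subgroup.center G) (hTB : T ≤ B)
    (hBn : (B.map (QuotientGroup.mk' T)).Normal)
    (hBnil : LocallyNilpotentGroup (B.map (QuotientGroup.mk' T)))
    (hBmax : ∀ C : Subgroup (G ⧸ T), C.Normal → LocallyNilpotentGroup C →
      C ≤ B.map (QuotientGroup.mk' T)) :
    LocallyNilpotentGroup B :=
  stmt15_general G T B (hTn := hTn) hTZ hBnil
end
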